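/- Let (s,t) ∈ ℚ²∖ℤ² and let A = ((a,b),(c,d)) ∈ Γ_{(s,t)} := { A ∈ SL(2,ℤ) : (s,t)A − (s,t) ∈ ℤ² }. Set u := s(a−1)+tc and v := sb+t(d−1); then u, v ∈ ℤ and, for all τ ∈ ℍ, (g_{(s,t)} |₁ A)(τ) − g_{(s,t)}(τ) = u·η₁(τ) + v·η₂(τ). -/

import Mathlib

/-- The lattice `ℤτ + ℤ`. -/
def lat (τ : ℂ) : Set ℂ := {w : ℂ | ∃ m n : ℤ, w = (m : ℂ) * τ + (n : ℂ)}

/-- The Weierstrass ζ-function attached to a set `Ω ⊂ ℂ`. -/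
noncomputable def wzeta (Ω : Set ℂ) (z : ℂ) : ℂ :=
  1 / z + ∑' ω : {w : ℂ // w ∈ Ω ∧ w ≠ 0},
    (1 / (z - (ω : ℂ)) + 1 / (ω : ℂ) + z / (ω : ℂ) ^ 2)

/-- `g_{(s,t)}(τ) = ζ(τ, sτ + t)`, where `ζ(τ,z) = ζ(τℤ+ℤ, z)`. -/
noncomputable def g (s t : ℚ) (τ : ℂ) : ℂ := wzeta (lat τ) ((s : ℂ) * τ + (t : ℂ))

/-!
Away from the lattice `Λ` one has `ζ' = -℘`, and `℘` is `Λ`-periodic, so for `l ∈ Λ` the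
difference `ζ(z + l) - ζ(z)` has zero derivative on `ℂ ∖ Λ`, which is connected (`Λ` is
countable); it is therefore a constant `η(l)`, and `η` is additive in `l`. Since
`ζ(λΛ, λz) = λ⁻¹ ζ(Λ, z)` and `A` maps `ℤτ + ℤ` onto `(cτ + d)(ℤ(Aτ) + ℤ)`, one gets
`(g_{(s,t)} |₁ A)(τ) = ζ(τ, (sτ + t) + (uτ + v))` with `(u, v) = (s,t)A - (s,t) ∈ ℤ²`, and
additivity of `η` gives `u η₁ + v η₂`.
-/

namespace PeriodPair

variable (L : PeriodPair)

-- For `l = 0` this is `1 / z`, since `1 / 0 = 0` and `z / 0 = 0`.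
noncomputable def weierstrassZetaSummand (l z : ℂ) : ℂ := 1 / (z - l) + 1 / l + z / l ^ 2

lemma norm_weierstrassZetaSummand_le (r : ℝ) (hr : 0 < r) (s : ℂ) (hs : ‖s‖ < r) (l : ℂ)
    (h : 2 * r ≤ ‖l‖) :
    ‖weierstrassZetaSummand l s‖ ≤ 2 * r ^ 2 * ‖l‖ ^ (-3 : ℝ) := by
  have hl : 0 < ‖l‖ := by linarith
  have hsl : ‖l‖ / 2 ≤ ‖s - l‖ := by
    rw [norm_sub_rev]; linarith [norm_sub_norm_le l s]
  have hsl0 : s - l ≠ 0 := norm_pos_iff.mp (by linarith)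
  have hl0 : l ≠ 0 := norm_pos_iff.mp hl
  calc ‖weierstrassZetaSummand l s‖ = ‖s‖ ^ 2 / (‖l‖ ^ 2 * ‖s - l‖) := by
        rw [weierstrassZetaSummand, ← norm_pow, ← norm_pow, ← norm_mul, ← norm_div]
        congr 1
        field_simp
        ring
    _ ≤ r ^ 2 / (‖l‖ ^ 2 * (‖l‖ / 2)) := by gcongr
    _ = 2 * r ^ 2 * ‖l‖ ^ (-3 : ℝ) := by
        rw [Real.rpow_neg hl.le]
        norm_cast
        field_simp

lemma hasSumLocallyUniformly_weierstrassZetaSummand :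
    HasSumLocallyUniformly (fun (l : L.lattice) z ↦ weierstrassZetaSummand l z)
      (∑' l : L.lattice, weierstrassZetaSummand l ·) :=
  L.hasSumLocallyUniformly_aux _ (u := fun r l ↦ 2 * r ^ 2 * ‖l‖ ^ (-3 : ℝ))
    (fun _ _ ↦ (ZLattice.summable_norm_rpow _ _ (by norm_num)).mul_left _)
    fun r hr ↦ Filter.eventually_atTop.mpr ⟨2 * r, fun _ h s hs l hl ↦
      norm_weierstrassZetaSummand_le r hr s hs l (hl ▸ h)⟩

lemma hasSum_wzeta_lattice (z : ℂ) :
    HasSum (fun l : L.lattice ↦ weierstrassZetaSummand l z) (wzeta L.lattice z) := by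
  set f := fun l : L.lattice ↦ weierstrassZetaSummand l z
  have hf : HasSum f (∑' l, f l) := L.hasSumLocallyUniformly_weierstrassZetaSummand.hasSum
  let e : {l : L.lattice // l ∉ ({0} : Finset L.lattice)} ≃ {w : ℂ // w ∈ L.lattice ∧ w ≠ 0} :=
    (Equiv.subtypeEquivRight (by simp)).trans
      (Equiv.subtypeSubtypeEquivSubtypeInter (· ∈ L.lattice) (· ≠ 0))
  have hnonzero : HasSum (fun w : {w : ℂ // w ∈ L.lattice ∧ w ≠ 0} ↦ weierstrassZetaSummand w z)
      (∑' l, f l - f 0) := by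
    rw [← e.hasSum_iff]
    exact (Finset.hasSum_compl_iff (f := f) {0}).mpr (by rwa [Finset.sum_singleton, sub_add_cancel])
  convert hf using 1
  change 1 / z + ∑' w : {w : ℂ // w ∈ L.lattice ∧ w ≠ 0}, weierstrassZetaSummand w z = _
  rw [hnonzero.tsum_eq]
  simp [f, weierstrassZetaSummand]

lemma hasDerivAt_weierstrassZetaSummand (l : ℂ) {z : ℂ} (hz : z ≠ l) :
    HasDerivAt (weierstrassZetaSummand l) (-(1 / (z - l) ^ 2 - 1 / l ^ 2)) z := by
  have hinv : HasDerivAt (fun w ↦ 1 / (w - l)) (-1 / (z - l) ^ 2) z := by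
    simpa [one_div] using ((hasDerivAt_id z).sub_const l).fun_inv (sub_ne_zero.mpr hz)
  exact ((hinv.add_const _).add ((hasDerivAt_id z).div_const _)).congr_deriv (by ring)

lemma hasDerivAt_wzeta_lattice {z : ℂ} (hz : z ∉ L.lattice) :
    HasDerivAt (wzeta L.lattice) (-℘[L] z) z := by
  refine hasDerivAt_of_tendstoLocallyUniformlyOn (isOpen_compl_iff.mpr L.isClosed_lattice)
    (L.hasSumLocallyUniformly_weierstrassP.tendstoLocallyUniformlyOn.neg) ?_
    (fun w _ ↦ L.hasSum_wzeta_lattice w) hz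
  refine .of_forall fun n w hw ↦ ?_
  simpa using HasDerivAt.fun_sum fun (l : L.lattice) _ ↦
    hasDerivAt_weierstrassZetaSummand (z := w) l (fun h ↦ hw (h ▸ l.2))

lemma isConnected_compl_lattice : IsConnected (L.lattice : Set ℂ)ᶜ :=
  Set.Countable.isConnected_compl_of_one_lt_rank (by simp)
    (Set.countable_coe_iff.mp (countable_of_Lindelof_of_discrete (X := L.lattice)))

lemma wzeta_lattice_add_sub_eq (l : L.lattice) {z w : ℂ} (hz : z ∉ L.lattice)
    (hw : w ∉ L.lattice) :
    wzeta L.lattice (z + l) - wzeta L.lattice z = wzeta L.lattice (w + l) - wzeta L.lattice w := by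
  have hderiv : ∀ x ∈ (L.lattice : Set ℂ)ᶜ,
      HasDerivAt (fun x ↦ wzeta L.lattice (x + l) - wzeta L.lattice x) 0 x := by
    intro x hx
    have hxl : x + l ∉ L.lattice := by rwa [add_mem_cancel_right l.2]
    simpa using ((L.hasDerivAt_wzeta_lattice hxl).comp_add_const x l).fun_sub
      (L.hasDerivAt_wzeta_lattice hx)
  exact (isOpen_compl_iff.mpr L.isClosed_lattice).is_const_of_deriv_eq_zero
    L.isConnected_compl_lattice.isPreconnected
    (fun x hx ↦ (hderiv x hx).differentiableAt.differentiableWithinAt)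
    (fun x hx ↦ (hderiv x hx).deriv) hz hw

-- By `wzeta_lattice_add_sub_eq` any base point off the lattice would do.
noncomputable def quasiPeriod : L.lattice →+ ℂ :=
  AddMonoidHom.mk' (fun l ↦ wzeta L.lattice (L.ω₁ / 2 + l) - wzeta L.lattice (L.ω₁ / 2))
    fun l l' ↦ by
      have := L.wzeta_lattice_add_sub_eq l' (z := L.ω₁ / 2 + l)
        (by rw [add_mem_cancel_right l.2]; exact L.ω₁_div_two_notMem_lattice)
        L.ω₁_div_two_notMem_lattice
      rw [AddSubmonoid.coe_add, ← add_assoc]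
      linear_combination this

lemma wzeta_lattice_add_coe {z : ℂ} (hz : z ∉ L.lattice) (l : L.lattice) :
    wzeta L.lattice (z + l) = wzeta L.lattice z + L.quasiPeriod l := by
  rw [quasiPeriod, AddMonoidHom.mk'_apply,
    ← L.wzeta_lattice_add_sub_eq l hz L.ω₁_div_two_notMem_lattice]
  ring

lemma wzeta_lattice_add_sub_eq_mul_add_mul {z w : ℂ} (hz : z ∉ L.lattice) (hw : w ∉ L.lattice)
    (m n : ℤ) :
    wzeta L.lattice (w + (m * L.ω₁ + n * L.ω₂)) - wzeta L.lattice w =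
      m * (wzeta L.lattice (z + L.ω₁) - wzeta L.lattice z) +
        n * (wzeta L.lattice (z + L.ω₂) - wzeta L.lattice z) := by
  let l : L.lattice := m • ⟨L.ω₁, L.ω₁_mem_lattice⟩ + n • ⟨L.ω₂, L.ω₂_mem_lattice⟩
  have hl : (l : ℂ) = m * L.ω₁ + n * L.ω₂ := by simp [l]
  rw [← hl, L.wzeta_lattice_add_coe hw, map_add, map_zsmul, map_zsmul,
    L.wzeta_lattice_add_coe hz ⟨L.ω₁, L.ω₁_mem_lattice⟩,
    L.wzeta_lattice_add_coe hz ⟨L.ω₂, L.ω₂_mem_lattice⟩]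
  simp

lemma intCast_mul_ω₁_add_mul_ω₂_eq_zero_iff {m n : ℤ} :
    m * L.ω₁ + n * L.ω₂ = 0 ↔ m = 0 ∧ n = 0 := by
  refine ⟨fun h ↦ ?_, fun ⟨hm, hn⟩ ↦ by simp [hm, hn]⟩
  have := LinearIndependent.pair_iff.mp L.indep m n (by simpa [Complex.real_smul] using h)
  exact_mod_cast this

@[simps]
noncomputable def ofTau (τ : ℂ) (hτ : τ.im ≠ 0) : PeriodPair where
  ω₁ := τ
  ω₂ := 1
  indep := LinearIndependent.pair_iff.mpr fun x y h ↦ by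
    have hx : x = 0 := by simpa [hτ] using congrArg Complex.im h
    subst hx
    simpa using h

lemma lattice_ofTau {τ : ℂ} (hτ : τ.im ≠ 0) : ((ofTau τ hτ).lattice : Set ℂ) = lat τ := by
  ext w
  simp [lat, mem_lattice, eq_comm]

end PeriodPair

lemma wzeta_image_mul {k : ℂ} (hk : k ≠ 0) (Ω : Set ℂ) (z : ℂ) :
    wzeta ((k * ·) '' Ω) (k * z) = k⁻¹ * wzeta Ω z := by
  let e : {w : ℂ // w ∈ Ω ∧ w ≠ 0} ≃ {w : ℂ // w ∈ (k * ·) '' Ω ∧ w ≠ 0} :=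
    (Equiv.mulLeft₀ k hk).subtypeEquiv fun w ↦ by
      simp [(mul_right_injective₀ hk).mem_set_image, hk]
  rw [wzeta, wzeta, ← e.tsum_eq, mul_add, ← tsum_mul_left]
  congr 1
  · field_simp
  · refine tsum_congr fun w ↦ ?_
    simp only [e, Equiv.subtypeEquiv_apply, Equiv.mulLeft₀_apply, ← mul_sub, div_mul_eq_div_div,
      mul_pow]
    field_simp

lemma lat_moebius {τ : ℂ} {a b c d : ℤ} (hA : a * d - b * c = 1) (hD : (c : ℂ) * τ + d ≠ 0) :
    lat ((a * τ + b) / (c * τ + d)) = ((c * τ + d)⁻¹ * ·) '' lat τ := by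
  have hA' : (a : ℂ) * d - b * c = 1 := by exact_mod_cast hA
  ext w
  constructor
  · rintro ⟨m, n, rfl⟩
    refine ⟨(m * a + n * c : ℤ) * τ + (m * b + n * d : ℤ), ⟨_, _, rfl⟩, ?_⟩
    field_simp
    push_cast
    ring
  · rintro ⟨x, ⟨m, n, rfl⟩, rfl⟩
    refine ⟨m * d - n * c, n * a - m * b, ?_⟩
    field_simp
    push_cast
    linear_combination (-(m * τ + n)) * hA'

lemma g_slash_eq {τ : ℂ} (s t : ℚ) {a b c d : ℤ} (hA : a * d - b * c = 1)
    (hD : (c : ℂ) * τ + d ≠ 0) :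
    ((c : ℂ) * τ + d)⁻¹ * g s t ((a * τ + b) / (c * τ + d)) =
      g (s * a + t * c) (s * b + t * d) τ := by
  have harg : (s : ℂ) * ((a * τ + b) / (c * τ + d)) + t =
      ((c : ℂ) * τ + d)⁻¹ * (((s * a + t * c : ℚ) : ℂ) * τ + (s * b + t * d : ℚ)) := by
    rw [eq_inv_mul_iff_mul_eq₀ hD, mul_add, mul_left_comm, mul_div_cancel₀ _ hD]
    push_cast
    ring
  rw [g, g, lat_moebius hA hD, harg, wzeta_image_mul (inv_ne_zero hD), inv_inv, ← mul_assoc,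
    inv_mul_cancel₀ hD, one_mul]

/-- for `(s,t) ∈ ℚ²∖ℤ²` and `A = ((a,b),(c,d)) ∈ Γ_{(s,t)}`, the numbers
`u = s(a−1)+tc` and `v = sb+t(d−1)` are integers and, for all `τ ∈ ℍ`,
`(g_{(s,t)} |₁ A)(τ) − g_{(s,t)}(τ) = u·η₁(τ) + v·η₂(τ)`, where
`η₁(τ) = ζ(τ, z+τ) − ζ(τ, z)` and `η₂(τ) = ζ(τ, z+1) − ζ(τ, z)` for any admissible
choice of `z ∉ ℤτ+ℤ` (the differences being independent of that choice). -/
theorem g_slash_sub_g (s t : ℚ) (hst : ¬ ∃ m n : ℤ, s = (m : ℚ) ∧ t = (n : ℚ))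
    (a b c d : ℤ) (hA : a * d - b * c = 1)
    (hΓ : ∃ m n : ℤ, s * a + t * c - s = (m : ℚ) ∧ s * b + t * d - t = (n : ℚ)) :
    (∃ u : ℤ, s * (a - 1) + t * c = (u : ℚ)) ∧
    (∃ v : ℤ, s * b + t * (d - 1) = (v : ℚ)) ∧
    (∀ τ : ℂ, 0 < τ.im → ∀ z : ℂ,
      z ∉ lat τ → z + τ ∉ lat τ → z + 1 ∉ lat τ →
      ((c : ℂ) * τ + (d : ℂ))⁻¹ *
          g s t (((a : ℂ) * τ + (b : ℂ)) / ((c : ℂ) * τ + (d : ℂ))) - g s t τ =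
        ((s * (a - 1) + t * c : ℚ) : ℂ) * (wzeta (lat τ) (z + τ) - wzeta (lat τ) z) +
          ((s * b + t * (d - 1) : ℚ) : ℂ) * (wzeta (lat τ) (z + 1) - wzeta (lat τ) z)) := by
  obtain ⟨m, n, hm, hn⟩ := hΓ
  have hu : s * (a - 1) + t * c = m := by linear_combination hm
  have hv : s * b + t * (d - 1) = n := by linear_combination hn
  refine ⟨⟨m, hu⟩, ⟨n, hv⟩, fun τ hτ z hz _ _ ↦ ?_⟩
  set L := PeriodPair.ofTau τ hτ.ne'
  have hD : (c : ℂ) * τ + d ≠ 0 := fun h ↦ by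
    obtain ⟨rfl, rfl⟩ := (L.intCast_mul_ω₁_add_mul_ω₂_eq_zero_iff (m := c) (n := d)).mp
      (by simpa [L] using h)
    simp at hA
  have hW : (s : ℂ) * L.ω₁ + t * L.ω₂ ∉ L.lattice := by
    rw [PeriodPair.mul_ω₁_add_mul_ω₂_mem_lattice]
    rintro ⟨hs, ht⟩
    exact hst ⟨s.num, t.num, (Rat.coe_int_num_of_den_eq_one hs).symm,
      (Rat.coe_int_num_of_den_eq_one ht).symm⟩
  have hz' : z ∉ L.lattice := by rwa [← SetLike.mem_coe, PeriodPair.lattice_ofTau]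
  have key := L.wzeta_lattice_add_sub_eq_mul_add_mul hz' hW m n
  simp only [L, PeriodPair.ofTau_ω₁, PeriodPair.ofTau_ω₂, mul_one, PeriodPair.lattice_ofTau] at key
  rw [g_slash_eq s t hA hD, g, g, show s * a + t * c = s + m by linear_combination hm,
    show s * b + t * d = t + n by linear_combination hn, hu, hv]
  push_cast
  convert key using 3
  ring
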